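/- Every factor w of vtm satisfies ||w|₀ - |w|₂| ≤ 1, where |w|_a counts occurrences of the letter a in w. -/
import Mathlib

/-- `u` is a factor of the infinite word `w`. -/
def IsFactorI {α : Type*} (u : List α) (w : ℕ → α) : Prop :=
  ∃ j : ℕ, u = (List.range u.length).map (fun i => w (j + i))

/-- The morphism `0 ↦ 012`, `1 ↦ 02`, `2 ↦ 1`. -/
def vtmMu : ℕ → List ℕ
  | 0 => [0, 1, 2]
  | 1 => [0, 2]
  | _ => [1]

/-- Iterates of the morphism on the letter `0`. -/
def vtmIter : ℕ → List ℕ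
  | 0 => [0]
  | k + 1 => (vtmIter k).flatMap vtmMu

/-- The ternary squarefree Thue–Morse word, the fixed point of `0 ↦ 012`, `1 ↦ 02`, `2 ↦ 1`. -/
def vtm (n : ℕ) : ℕ := (vtmIter (n + 1)).getD n 0

private def dz (l : List ℕ) : ℤ := (l.count 0 : ℤ) - (l.count 2 : ℤ)

private lemma dz_append (a b : List ℕ) : dz (a ++ b) = dz a + dz b := by
  simp [dz, List.count_append]; ring

private lemma dz_mu (a : ℕ) : dz (vtmMu a) = 0 := by
  match a with
  | 0 => decide
  | 1 => decide
  | n + 2 => show dz [1] = 0; decide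

private lemma dz_prefix_mu (a : ℕ) (p : List ℕ) (h : p <+: vtmMu a) :
    dz p = 0 ∨ dz p = 1 := by
  match a with
  | 0 =>
    have := (List.mem_inits p _).mpr h
    simp [vtmMu, List.inits] at this
    rcases this with rfl | rfl | rfl | rfl <;> simp [dz]
  | 1 =>
    have := (List.mem_inits p _).mpr h
    simp [vtmMu, List.inits] at this
    rcases this with rfl | rfl | rfl <;> simp [dz]
  | n + 2 =>
    have h' : p <+: [1] := h
    have := (List.mem_inits p _).mpr h'
    simp [List.inits] at this
    rcases this with rfl | rfl <;> simp [dz]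

private lemma lemA : ∀ (w p : List ℕ), p <+: w.flatMap vtmMu → dz p = 0 ∨ dz p = 1 := by
  intro w
  induction w with
  | nil => intro p h; simp at h; subst h; simp [dz]
  | cons a t ih =>
    intro p h
    rw [List.flatMap_cons] at h
    by_cases hlen : p.length ≤ (vtmMu a).length
    · exact dz_prefix_mu a p
        (List.prefix_of_prefix_length_le h (List.prefix_append _ _) hlen)
    · have hmu : vtmMu a <+: p :=
        List.prefix_of_prefix_length_le (List.prefix_append _ _) h (le_of_not_ge hlen)
      obtain ⟨p', rfl⟩ := hmu
      have h' : p' <+: t.flatMap vtmMu := (List.prefix_append_right_inj _).mp h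
      rw [dz_append, dz_mu]
      simpa using ih p' h'

private lemma vtmIter_head : ∀ k, ∃ t, vtmIter k = 0 :: t := by
  intro k
  induction k with
  | zero => exact ⟨[], rfl⟩
  | succ k ih =>
    obtain ⟨t, ht⟩ := ih
    exact ⟨1 :: 2 :: t.flatMap vtmMu, by simp [vtmIter, ht, vtmMu]⟩

private lemma mu_len (l : List ℕ) : l.length ≤ (l.flatMap vtmMu).length := by
  induction l with
  | nil => simp
  | cons a t ih =>
    rw [List.flatMap_cons, List.length_append]
    have : 1 ≤ (vtmMu a).length := by
      match a with
      | 0 => decide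
      | 1 => decide
      | n + 2 => show 1 ≤ ([1] : List ℕ).length; decide
    simp only [List.length_cons]
    omega

private lemma vtmIter_len : ∀ k, k < (vtmIter k).length := by
  intro k
  induction k with
  | zero => decide
  | succ k ih =>
    obtain ⟨t, ht⟩ := vtmIter_head k
    have h1 : (vtmIter (k+1)) = [0,1,2] ++ t.flatMap vtmMu := by
      simp [vtmIter, ht, vtmMu]
    have h2 := mu_len t
    have h3 : (vtmIter k).length = t.length + 1 := by rw [ht]; simp
    rw [h1, List.length_append]
    simp only [List.length_cons, List.length_nil]
    omega

private lemma vtmIter_prefix_succ (k : ℕ) : vtmIter k <+: vtmIter (k+1) := by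
  induction k with
  | zero => decide
  | succ k ih =>
    obtain ⟨s, hs⟩ := ih
    show (vtmIter k).flatMap vtmMu <+: (vtmIter (k+1)).flatMap vtmMu
    rw [← hs, List.flatMap_append]
    exact List.prefix_append _ _

private lemma vtmIter_prefix {k m : ℕ} (h : k ≤ m) : vtmIter k <+: vtmIter m := by
  induction m with
  | zero => interval_cases k; exact List.prefix_refl _
  | succ m ih =>
    rcases Nat.lt_or_ge k (m+1) with h' | h'
    · exact (ih (by omega)).trans (vtmIter_prefix_succ m)
    · have : k = m + 1 := by omega
      subst this; exact List.prefix_refl _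

private lemma vtm_eq (m i : ℕ) (h : i < (vtmIter m).length) :
    (vtmIter m).getD i 0 = vtm i := by
  have hi : i < (vtmIter (i+1)).length := lt_of_lt_of_le (by omega) (vtmIter_len (i+1)).le
  unfold vtm
  rw [List.getD_eq_getElem _ _ h, List.getD_eq_getElem _ _ hi]
  rcases le_total m (i+1) with hm | hm
  · exact (vtmIter_prefix hm).getElem h
  · exact ((vtmIter_prefix hm).getElem hi).symm

private lemma dz_pre (n : ℕ) :
    dz ((List.range n).map vtm) = 0 ∨ dz ((List.range n).map vtm) = 1 := by
  have hn : n < (vtmIter (n+1)).length := lt_of_lt_of_le (by omega) (vtmIter_len (n+1)).le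
  have heq : (List.range n).map vtm = (vtmIter (n+1)).take n := by
    apply List.ext_getElem
    · simp [Nat.min_eq_left hn.le]
    · intro i h1 h2
      simp only [List.getElem_map, List.getElem_range, List.getElem_take]
      have hi : i < (vtmIter (n+1)).length := by
        simp at h2; omega
      rw [← vtm_eq (n+1) i hi, List.getD_eq_getElem _ _ hi]
  rw [heq]
  exact lemA (vtmIter n) _ (List.take_prefix _ _)

theorem vtm_balanced_zero_two (u : List ℕ) (hu : IsFactorI u vtm) :
    |(u.count 0 : ℤ) - (u.count 2 : ℤ)| ≤ 1 := by
  obtain ⟨j, hj⟩ := hu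
  have hsplit : (List.range (j + u.length)).map vtm
      = (List.range j).map vtm ++ u := by
    rw [List.range_add, List.map_append, List.map_map]
    conv_rhs => rw [hj]
    rfl
  have h1 := dz_pre (j + u.length)
  have h2 := dz_pre j
  rw [hsplit, dz_append] at h1
  have : dz u = (u.count 0 : ℤ) - (u.count 2 : ℤ) := rfl
  rw [← this, abs_le]
  constructor <;> rcases h1 with h1 | h1 <;> rcases h2 with h2 | h2 <;> omega
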